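/- arXiv:1612.05389 — 6 statements merged into one kernel-verified Lean document; each statement's English description precedes it below -/
import Mathlib

section
/- For any q ∈ (0,1) and any ω > 0, the inequality ω·cos(qπ/2) + sin(qπ/2) ≥ ω^(1-q) holds. -/
/-! Jordan's inequality gives `sin (q π / 2) ≥ q`, and the chord bound for the concave cosine
on `[0, π/2]` gives `cos (q π / 2) ≥ 1 - q`. Hence the left-hand side is at least
`(1 - q) ω + q`, which dominates `ω ^ (1 - q)` by the weighted AM–GM (Young) inequality. -/

open Real

namespace Real

variable {q : ℝ}

lemma le_sin_mul_pi_div_two (hq0 : 0 ≤ q) (hq1 : q ≤ 1) : q ≤ sin (q * π / 2) := by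
  have h := mul_le_sin (x := q * π / 2) (by positivity) (by nlinarith [pi_pos])
  rwa [show 2 / π * (q * π / 2) = q by field_simp] at h

lemma one_sub_le_cos_mul_pi_div_two (hq0 : 0 ≤ q) (hq1 : q ≤ 1) :
    1 - q ≤ cos (q * π / 2) := by
  have h := one_sub_mul_le_cos (x := q * π / 2) (by positivity) (by nlinarith [pi_pos])
  rwa [show 2 / π * (q * π / 2) = q by field_simp] at h

lemma rpow_one_sub_le_one_sub_mul_add {ω : ℝ} (hω : 0 ≤ ω) (hq0 : 0 ≤ q) (hq1 : q ≤ 1) :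
    ω ^ (1 - q) ≤ (1 - q) * ω + q := by
  simpa using geom_mean_le_arith_mean2_weighted (sub_nonneg.2 hq1) hq0 hω zero_le_one (by ring)

end Real

theorem stmt_0 (q ω : ℝ) (hq0 : 0 < q) (hq1 : q < 1) (hω : 0 < ω) :
    ω * Real.cos (q * π / 2) + Real.sin (q * π / 2) ≥ ω ^ (1 - q) :=
  calc ω ^ (1 - q) ≤ (1 - q) * ω + q := rpow_one_sub_le_one_sub_mul_add hω.le hq0.le hq1.le
    _ ≤ ω * cos (q * π / 2) + sin (q * π / 2) := by
      rw [mul_comm]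
      gcongr
      · exact one_sub_le_cos_mul_pi_div_two hq0.le hq1.le
      · exact le_sin_mul_pi_div_two hq0.le hq1.le
end

section
/- Let q ∈ (0,1), a ≥ 0, b > 0, c > 0, and let s be a complex number with Re(s) ≥ 0 and s ≠ -b. If s^(q+1) + a·s + b·s^q + c = 0 (principal branch of the complex power), then Re(s^q) ≤ 0. -/
/-!
Since `s ≠ 0` (at `s = 0` the equation reads `c = 0`), `s ^ (q + 1) = s ^ q * s`, so the equation
factors as `s ^ q * (s + b) = -(a * s + c)`. Hence `s ^ q = -(a * s + c) / (s + b)`, whose real part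
is `-(a |s|² + (a b + c) Re s + b c) / |s + b|²`, a nonpositive number when `Re s ≥ 0`.
-/

open Complex

namespace Complex

theorem ne_zero_of_cpow_add_one_add_eq_zero {q a b c s : ℂ} (hq : 0 < q.re) (hc : c ≠ 0)
    (hroot : s ^ (q + 1) + a * s + b * s ^ q + c = 0) : s ≠ 0 := by
  rintro rfl
  have hq0 : q ≠ 0 := fun h => by simp [h] at hq
  have hq1 : q + 1 ≠ 0 := fun h => by
    have := congrArg re h
    simp only [add_re, one_re, zero_re] at this
    linarith
  exact hc (by simpa [zero_cpow hq0, zero_cpow hq1] using hroot)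

theorem cpow_mul_add_eq_of_cpow_add_one_add_eq_zero {q a b c s : ℂ} (hs : s ≠ 0)
    (hroot : s ^ (q + 1) + a * s + b * s ^ q + c = 0) : s ^ q * (s + b) = -(a * s + c) := by
  rw [cpow_add _ _ hs, cpow_one] at hroot
  linear_combination hroot

theorem re_ofReal_mul_add_div_add_ofReal (a b c : ℝ) (s : ℂ) :
    ((a * s + c) / (s + b)).re = (a * normSq s + (a * b + c) * s.re + b * c) / normSq (s + b) := by
  rw [div_re, ← add_div]
  congr 1
  simp only [add_re, add_im, mul_re, mul_im, ofReal_re, ofReal_im, normSq_apply]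
  ring

end Complex

theorem stmt_7_general (q a b c : ℝ) (hq0 : 0 < q) (ha : 0 ≤ a) (hb : 0 < b)
    (hc : 0 < c) (s : ℂ) (hs : 0 ≤ s.re) (hsb : s ≠ -(b : ℂ))
    (hroot : s ^ ((q : ℂ) + 1) + (a : ℂ) * s + (b : ℂ) * s ^ (q : ℂ) + (c : ℂ) = 0) :
    (s ^ (q : ℂ)).re ≤ 0 := by
  have hs0 : s ≠ 0 :=
    ne_zero_of_cpow_add_one_add_eq_zero (by simpa using hq0) (ofReal_ne_zero.mpr hc.ne') hroot
  have hsb' : s + b ≠ 0 := fun h => hsb (eq_neg_of_add_eq_zero_left h)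
  have hquot : s ^ (q : ℂ) = -((a * s + c) / (s + b)) := by
    rw [← neg_div, eq_div_iff hsb']
    exact cpow_mul_add_eq_of_cpow_add_one_add_eq_zero hs0 hroot
  rw [hquot, neg_re, re_ofReal_mul_add_div_add_ofReal, neg_nonpos]
  refine div_nonneg ?_ (normSq_nonneg _)
  have hab : 0 ≤ a * b + c := by positivity
  exact add_nonneg (add_nonneg (mul_nonneg ha (normSq_nonneg s)) (mul_nonneg hab hs)) (by positivity)

theorem stmt_7 (q a b c : ℝ) (hq0 : 0 < q) (hq1 : q < 1) (ha : 0 ≤ a) (hb : 0 < b)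
    (hc : 0 < c) (s : ℂ) (hs : 0 ≤ s.re) (hsb : s ≠ -(b : ℂ))
    (hroot : s ^ ((q : ℂ) + 1) + (a : ℂ) * s + (b : ℂ) * s ^ (q : ℂ) + (c : ℂ) = 0) :
    (s ^ (q : ℂ)).re ≤ 0 :=
  stmt_7_general q a b c hq0 ha hb hc s hs hsb hroot
end

section
/- Let q ∈ (0,1), a, b, c ∈ ℝ with a ≥ 0, b > 0, c > 0. Then the equation s^(q+1) + a·s + b·s^q + c = 0 (principal branch) has no complex root s with Re(s) ≥ 0. -/
/-!
For `s ≠ 0` in the closed right half-plane, `|arg s| ≤ π/2` and `|q| < 1` give `Re (s ^ q) > 0`.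
On the other hand, writing `s ^ (q + 1) = s ^ q * s`, a root would satisfy
`s ^ q = -(a s + c) / (s + b)`, whose real part has numerator
`-(a |s|² + (a b + c) Re s + b c) < 0`. At `s = 0` the equation reduces to `c = 0`.
-/

open Complex

theorem Complex.add_ofReal_ne_zero {s : ℂ} (hs : 0 ≤ s.re) {b : ℝ} (hb : 0 < b) : s + b ≠ 0 :=
  fun h => by
    have := congrArg re h
    simp only [add_re, ofReal_re, zero_re] at this
    linarith

theorem Complex.re_cpow_ofReal_pos {s : ℂ} (hs0 : s ≠ 0) (hs : 0 ≤ s.re) {q : ℝ} (hq : |q| < 1) :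
    0 < (s ^ (q : ℂ)).re := by
  rw [cpow_ofReal_re]
  refine mul_pos (Real.rpow_pos_of_pos (norm_pos_iff.mpr hs0) q) (Real.cos_pos_of_mem_Ioo ?_)
  have harg : |s.arg * q| < Real.pi / 2 := by
    rw [abs_mul]
    calc |s.arg| * |q| ≤ Real.pi / 2 * |q| := by
          gcongr; exact abs_arg_le_pi_div_two_iff.mpr hs
      _ < Real.pi / 2 := mul_lt_of_lt_one_right (by positivity) hq
  exact abs_lt.mp harg

theorem Complex.re_mul_add_div_add_pos {a b c : ℝ} (ha : 0 ≤ a) (hb : 0 < b) (hc : 0 < c)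
    {s : ℂ} (hs : 0 ≤ s.re) : 0 < ((a * s + c) / (s + b)).re := by
  rw [div_re, ← add_div]
  apply div_pos _ (normSq_pos.mpr (add_ofReal_ne_zero hs hb))
  simp only [add_re, mul_re, add_im, mul_im, ofReal_re, ofReal_im]
  nlinarith [mul_nonneg ha (mul_self_nonneg s.re), mul_nonneg ha (mul_self_nonneg s.im),
    mul_nonneg (mul_nonneg ha hb.le) hs, mul_nonneg hc.le hs, mul_pos hb hc]

theorem stmt_9 (q a b c : ℝ) (hq0 : 0 < q) (hq1 : q < 1) (ha : 0 ≤ a) (hb : 0 < b)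
    (hc : 0 < c) (s : ℂ) (hs : 0 ≤ s.re) :
    s ^ ((q : ℂ) + 1) + (a : ℂ) * s + (b : ℂ) * s ^ (q : ℂ) + (c : ℂ) ≠ 0 := by
  intro h
  rcases eq_or_ne s 0 with rfl | hs0
  · have hq : (q : ℂ) ≠ 0 := ofReal_ne_zero.mpr hq0.ne'
    have hq' : (q : ℂ) + 1 ≠ 0 := by exact_mod_cast (by linarith : q + 1 ≠ 0)
    rw [zero_cpow hq, zero_cpow hq'] at h
    simp only [mul_zero, zero_add, ofReal_eq_zero] at h
    exact hc.ne' h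
  · have hsb := add_ofReal_ne_zero hs hb
    have hroot : s ^ (q : ℂ) = -((a * s + c) / (s + b)) := by
      rw [cpow_add _ _ hs0, cpow_one] at h
      field_simp
      linear_combination h
    have hpos := re_cpow_ofReal_pos hs0 hs (abs_lt.mpr ⟨by linarith, hq1⟩)
    rw [hroot, neg_re] at hpos
    linarith [re_mul_add_div_add_pos ha hb hc hs]
end

section
/- Let q ∈ (0,1), b > 0, c > 0, ω > 0. The complex number s = i·b·ω is a root of Δ(s) = s^(q+1) + a·s + b·s^q + c (principal branch) for some a ∈ ℝ if and only if ω > cot(qπ/2), c = b^(q+1)·ω^q·(ω·sin(qπ/2) − cos(qπ/2)), and a = −b^q·ω^(q−1)·(ω·cos(qπ/2) + sin(qπ/2)). -/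
open Real

/-! On the positive imaginary axis the principal power is `(i r)^t = r^t (cos (tπ/2) + i sin (tπ/2))`.
Writing `s^(q+1) = s^q · s`, the equation `Δ(i b ω) = 0` splits into two real equations that are
linear in `c` and in `a`; solving them gives the formulas, and `c > 0` then says exactly
`ω sin (qπ/2) > cos (qπ/2)`, i.e. `ω > cot (qπ/2)` since `sin (qπ/2) > 0`. -/

namespace Complex

lemma I_mul_ofReal_cpow {r : ℝ} (hr : 0 < r) (t : ℝ) :
    (I * r) ^ (t : ℂ) = ↑(r ^ t) * (Real.cos (t * π / 2) + Real.sin (t * π / 2) * I) := by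
  rw [cpow_ofReal, arg_mul_real hr, arg_I, norm_mul, norm_I, norm_real, Real.norm_of_nonneg hr.le,
    one_mul, mul_comm (π / 2), mul_div_assoc]

lemma I_mul_ofReal_cpow_add_one_add_eq_zero_iff {r : ℝ} (hr : 0 < r) (p a b c : ℝ) :
    (I * r) ^ ((p : ℂ) + 1) + a * (I * r) + b * (I * r) ^ (p : ℂ) + c = 0 ↔
      r ^ p * (b * Real.cos (p * π / 2) - r * Real.sin (p * π / 2)) + c = 0 ∧
      r ^ p * (b * Real.sin (p * π / 2) + r * Real.cos (p * π / 2)) + a * r = 0 := by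
  have hs : I * (r : ℂ) ≠ 0 := mul_ne_zero I_ne_zero (ofReal_ne_zero.2 hr.ne')
  rw [cpow_add _ _ hs, cpow_one, I_mul_ofReal_cpow hr, Complex.ext_iff]
  simp only [add_re, add_im, mul_re, mul_im, ofReal_re, ofReal_im, I_re, I_im, zero_re, zero_im]
  constructor <;> rintro ⟨hre, him⟩ <;> exact ⟨by linear_combination hre, by linear_combination him⟩

end Complex

lemma cot_lt_iff_of_sin_pos {x ω : ℝ} (hx : 0 < Real.sin x) :
    Real.cot x < ω ↔ 0 < ω * Real.sin x - Real.cos x := by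
  rw [Real.cot_eq_cos_div_sin, div_lt_iff₀ hx, sub_pos]

theorem stmt_10 (q b c ω : ℝ) (hq0 : 0 < q) (hq1 : q < 1) (hb : 0 < b) (hc : 0 < c)
    (hω : 0 < ω) (a : ℝ) :
    ((Complex.I * b * ω) ^ ((q : ℂ) + 1) + (a : ℂ) * (Complex.I * b * ω)
      + (b : ℂ) * (Complex.I * b * ω) ^ (q : ℂ) + (c : ℂ) = 0)
    ↔ (ω > Real.cot (q * π / 2)
        ∧ c = b ^ (q + 1) * ω ^ q * (ω * Real.sin (q * π / 2) - Real.cos (q * π / 2))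
        ∧ a = -b ^ q * ω ^ (q - 1) * (ω * Real.cos (q * π / 2) + Real.sin (q * π / 2))) := by
  have hsin : 0 < Real.sin (q * π / 2) := by
    apply Real.sin_pos_of_pos_of_lt_pi <;> nlinarith [Real.pi_pos]
  have hbω : Complex.I * b * ω = Complex.I * ((b * ω : ℝ) : ℂ) := by push_cast; ring
  rw [hbω, Complex.I_mul_ofReal_cpow_add_one_add_eq_zero_iff (mul_pos hb hω),
    Real.mul_rpow hb.le hω.le, Real.rpow_add_one hb.ne', Real.rpow_sub_one hω.ne', gt_iff_lt, cot_lt_iff_of_sin_pos hsin]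
  constructor
  · rintro ⟨hre, him⟩
    have hc_eq : c = b ^ q * b * ω ^ q * (ω * Real.sin (q * π / 2) - Real.cos (q * π / 2)) := by
      linear_combination hre
    refine ⟨pos_of_mul_pos_right (hc_eq ▸ hc) (by positivity), hc_eq, ?_⟩
    have ha_mul : a * ω = -(b ^ q * ω ^ q * (ω * Real.cos (q * π / 2) + Real.sin (q * π / 2))) :=
      mul_left_cancel₀ hb.ne' (by linear_combination him)
    field_simp
    linear_combination ha_mul
  · rintro ⟨-, hc_eq, ha_eq⟩
    refine ⟨by linear_combination hc_eq, ?_⟩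
    rw [ha_eq]
    field_simp
    ring
end

section
/- Let q ∈ (0,1), b > 0, c > 0, and define a*(b,c,q) = −b^q·(h_q⁻¹(c/b^(q+1)))^(q−1)·(h_q⁻¹(c/b^(q+1))·cos(qπ/2) + sin(qπ/2)), where h_q⁻¹ is the inverse of h_q(ω) = ω^q(ω sin(qπ/2) − cos(qπ/2)) on (cot(qπ/2), ∞). Then a*(b,c,q) ≤ −b^q. -/
/-!
By Jordan's inequalities, `q ≤ sin (qπ/2)` and `1 - q ≤ cos (qπ/2)` for `q ∈ [0, 1]`, while
Bernoulli's inequality gives `ω ^ (1 - q) ≤ (1 - q) ω + q`. Hence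
`ω ^ (1 - q) ≤ ω cos (qπ/2) + sin (qπ/2)`, i.e. `ω ^ (q - 1) (ω cos (qπ/2) + sin (qπ/2)) ≥ 1`
for every `ω > 0`.
-/

open Real

namespace Real

variable {q : ℝ}

lemma cot_mul_pi_div_two_pos (hq0 : 0 < q) (hq1 : q < 1) : 0 < cot (q * π / 2) := by
  have hθ0 : 0 < q * π / 2 := by positivity
  have hθ1 : q * π / 2 < π / 2 := by nlinarith [pi_pos]
  rw [cot_eq_cos_div_sin]
  exact div_pos (cos_pos_of_mem_Ioo ⟨by linarith, hθ1⟩)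
    (sin_pos_of_pos_of_lt_pi hθ0 (by linarith))

lemma rpow_one_sub_le_mul_cos_add_sin (hq0 : 0 ≤ q) (hq1 : q ≤ 1) {x : ℝ} (hx : 0 ≤ x) :
    x ^ (1 - q) ≤ x * cos (q * π / 2) + sin (q * π / 2) :=
  calc x ^ (1 - q) = (1 + (x - 1)) ^ (1 - q) := by ring_nf
    _ ≤ 1 + (1 - q) * (x - 1) :=
      rpow_one_add_le_one_add_mul_self (by linarith) (by linarith) (by linarith)
    _ = x * (1 - q) + q := by ring
    _ ≤ x * cos (q * π / 2) + sin (q * π / 2) := by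
      gcongr
      exacts [one_sub_le_cos_mul_pi_div_two hq0 hq1, le_sin_mul_pi_div_two hq0 hq1]

lemma one_le_rpow_sub_one_mul_mul_cos_add_sin (hq0 : 0 ≤ q) (hq1 : q ≤ 1) {x : ℝ} (hx : 0 < x) :
    1 ≤ x ^ (q - 1) * (x * cos (q * π / 2) + sin (q * π / 2)) :=
  calc (1 : ℝ) = x ^ (q - 1) * x ^ (1 - q) := by rw [← rpow_add hx]; norm_num
    _ ≤ _ := by gcongr; exact rpow_one_sub_le_mul_cos_add_sin hq0 hq1 hx.le

end Real

theorem stmt_11_general (q b ω : ℝ) (hq0 : 0 < q) (hq1 : q < 1) (hb : 0 < b)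
    (hω : ω > Real.cot (q * π / 2)) :
    -b ^ q * ω ^ (q - 1) * (ω * Real.cos (q * π / 2) + Real.sin (q * π / 2)) ≤ -b ^ q := by
  have hω0 : 0 < ω := (cot_mul_pi_div_two_pos hq0 hq1).trans hω
  have h := mul_le_mul_of_nonneg_left
    (one_le_rpow_sub_one_mul_mul_cos_add_sin hq0.le hq1.le hω0) (rpow_nonneg hb.le q)
  linarith

theorem stmt_11 (q b c ω : ℝ) (hq0 : 0 < q) (hq1 : q < 1) (hb : 0 < b) (hc : 0 < c)
    (hω : ω > Real.cot (q * π / 2))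
    (hinv : ω ^ q * (ω * Real.sin (q * π / 2) - Real.cos (q * π / 2)) = c / b ^ (q + 1)) :
    -b ^ q * ω ^ (q - 1) * (ω * Real.cos (q * π / 2) + Real.sin (q * π / 2)) ≤ -b ^ q :=
  stmt_11_general q b ω hq0 hq1 hb hω
end

section
/- Let q ∈ (0,1) and a, b, c ∈ ℝ with b > 0, c > 1, 0 < a + b + c + 1 < (√c − 1)², then Δ(s) = s^(q+1) + a·s + b·s^q + c has at least one positive real root. -/
/-!
For `s ≥ 1` the exponents `q + 1 ≤ 2` and `q ≤ 1` give `Δ(s) ≤ s² + (a + b) s + c`. The hypothesis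
`a + b + c + 1 < (√c - 1)²` says `a + b < -2√c`, so this quadratic is negative at its vertex
`s₀ = -(a + b) / 2 > √c > 1`, while `Δ(1) = a + b + c + 1 > 0`. The intermediate value theorem on
`[1, s₀]` yields the root.
-/

open Real Set

noncomputable def delta (q a b c s : ℝ) : ℝ :=
  s ^ (q + 1) + a * s + b * s ^ q + c

lemma continuousOn_delta (q a b c : ℝ) : ContinuousOn (delta q a b c) (Ioi 0) := by
  intro s hs
  have hs0 : s ≠ 0 := (mem_Ioi.mp hs).ne'
  unfold delta
  fun_prop (disch := exact Or.inl hs0)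

lemma delta_le_quadratic {q a b c s : ℝ} (hq : q ≤ 1) (hb : 0 ≤ b) (hs : 1 ≤ s) :
    delta q a b c s ≤ s ^ 2 + (a + b) * s + c := by
  have hsq : s ^ (q + 1) ≤ s ^ 2 := by
    simpa using Real.rpow_le_rpow_of_exponent_le hs (show q + 1 ≤ (2 : ℕ) by norm_num; linarith)
  have hlin : s ^ q ≤ s := by
    simpa using Real.rpow_le_rpow_of_exponent_le hs hq
  unfold delta
  nlinarith

lemma quadratic_vertex_neg {p c : ℝ} (hc : 0 ≤ c) (hp : p < -2 * √c) :
    (-p / 2) ^ 2 + p * (-p / 2) + c < 0 := by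
  have hsq : √c ^ 2 = c := Real.sq_sqrt hc
  nlinarith [Real.sqrt_nonneg c]

theorem stmt_13_general (q a b c : ℝ) (hq1 : q < 1) (hb : 0 < b) (hc : 1 < c)
    (h1 : 0 < a + b + c + 1) (h2 : a + b + c + 1 < (Real.sqrt c - 1) ^ 2) :
    ∃ s : ℝ, 0 < s ∧ s ^ (q + 1) + a * s + b * s ^ q + c = 0 := by
  have hc0 : 0 ≤ c := by linarith
  have hsqrt : 1 < √c := Real.lt_sqrt zero_le_one |>.mpr (by simpa using hc)
  have hab : a + b < -2 * √c := by nlinarith [Real.sq_sqrt hc0]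
  set s₀ := -(a + b) / 2 with hs₀_def
  have hs₀ : 1 < s₀ := by linarith
  have hΔ1 : 0 < delta q a b c 1 := by simp only [delta, Real.one_rpow]; linarith
  have hΔs₀ : delta q a b c s₀ < 0 :=
    (delta_le_quadratic hq1.le hb.le hs₀.le).trans_lt (quadratic_vertex_neg hc0 hab)
  have hcont : ContinuousOn (delta q a b c) (Icc 1 s₀) :=
    (continuousOn_delta q a b c).mono fun s hs => lt_of_lt_of_le one_pos hs.1
  obtain ⟨s, hs, hroot⟩ := intermediate_value_Icc' hs₀.le hcont ⟨hΔs₀.le, hΔ1.le⟩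
  exact ⟨s, lt_of_lt_of_le one_pos hs.1, hroot⟩

theorem stmt_13 (q a b c : ℝ) (hq0 : 0 < q) (hq1 : q < 1) (hb : 0 < b) (hc : 1 < c)
    (h1 : 0 < a + b + c + 1) (h2 : a + b + c + 1 < (Real.sqrt c - 1) ^ 2) :
    ∃ s : ℝ, 0 < s ∧ s ^ (q + 1) + a * s + b * s ^ q + c = 0 :=
  stmt_13_general q a b c hq1 hb hc h1 h2
end
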